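/- arXiv:2407.06299 — 2 statements merged into one kernel-verified Lean document; each statement's English description precedes it below -/
import Mathlib

section
/- Directed chromatic index of the transitive tournament: Let n ≥ 1 and let G be the transitive tournament on Fin n, i.e., G i j iff i < j. Then the least m such that the edges (2-walks) of G can be colored by a set of m elements with the colors of (v_1, v_2) and (v_2, v_3) differing for every 3-walk (v_1, v_2, v_3), equals ⌈log₂ n⌉; equivalently, such an edge coloring with m colors exists if and only if n ≤ 2^m. -/
/-- A `k`-walk in the digraph `G` is a function `w : Fin k → V` such that
consecutive vertices are joined by an edge of `G`. -/
def IsWalk {V : Type*} (G : V → V → Prop) {k : ℕ} (w : Fin k → V) : Prop :=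
  ∀ i : ℕ, ∀ h : i + 1 < k, G (w ⟨i, Nat.lt_of_succ_lt h⟩) (w ⟨i + 1, h⟩)

theorem IsWalk.walkPrefix {V : Type*} {G : V → V → Prop} {k : ℕ} {u : Fin (k + 1) → V}
    (hu : IsWalk G u) : IsWalk G (fun i : Fin k => u i.castSucc) := by
  intro i h
  exact hu i (by omega)

theorem IsWalk.walkSuffix {V : Type*} {G : V → V → Prop} {k : ℕ} {u : Fin (k + 1) → V}
    (hu : IsWalk G u) : IsWalk G (fun i : Fin k => u i.succ) := by
  intro i h
  exact hu (i + 1) (by omega)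

/-- The `k`-walks of `G`, as a subtype. -/
def Walks {V : Type*} (G : V → V → Prop) (k : ℕ) : Type _ :=
  {w : Fin k → V // IsWalk G w}

/-- A `P`-coloring of the `k`-walks of `G`: for every `(k+1)`-walk `u`,
the color of its prefix `k`-walk is not `≤` the color of its suffix `k`-walk. -/
def IsPColoring {V : Type*} {P : Type*} [Preorder P] (G : V → V → Prop) (k : ℕ)
    (c : Walks G k → P) : Prop :=
  ∀ u : Walks G (k + 1),
    ¬ c ⟨fun i => u.1 i.castSucc, u.2.walkPrefix⟩ ≤ c ⟨fun i => u.1 i.succ, u.2.walkSuffix⟩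

/-- The edges of the transitive tournament on `Fin n` (with `i → j` iff `i < j`) can be
colored with `m` colors so that the two edges of any 3-walk get different colors. -/
def TournamentEdgeColorable (n m : ℕ) : Prop :=
  ∃ d : {e : Fin n × Fin n // e.1 < e.2} → Fin m,
    ∀ w : Fin 3 → Fin n, ∀ hw : IsWalk (fun i j : Fin n => i < j) w,
      d ⟨(w ⟨0, by omega⟩, w ⟨1, by omega⟩), hw 0 (by omega)⟩ ≠
      d ⟨(w ⟨1, by omega⟩, w ⟨2, by omega⟩), hw 1 (by omega)⟩

/-!
A proper coloring `d` gives an injection `v ↦ {colors of the edges leaving v}` into the subsets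
of the colors: for `i < j`, the color of `i → j` leaves `i`, but cannot leave `j`, since
`i → j → k` would repeat it. Hence `n ≤ 2 ^ m`. Conversely, for `n ≤ 2 ^ m`, color `i → j` by
the most significant bit in which the binary expansions of `i` and `j` differ, which is `< m`.
As `i < j`, that bit is `0` in `i` and `1` in `j`; so along `i → j → k` the bit of the first
edge is `1` in `j` and the bit of the second edge is `0` in `j`, and the colors differ.
-/

namespace Nat

theorem testBit_log_two_xor_of_lt {a b : ℕ} (h : a < b) :
    a.testBit (log 2 (a ^^^ b)) = false ∧ b.testBit (log 2 (a ^^^ b)) = true := by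
  set t := log 2 (a ^^^ b)
  have hxor : a ^^^ b ≠ 0 := xor_eq_zero_iff.not.2 h.ne
  have hdiff : a.testBit t ≠ b.testBit t := by
    have htop := testBit_log2 hxor
    rw [log2_eq_log_two] at htop
    simpa [testBit_xor] using htop
  have hhigh : ∀ j, t < j → a.testBit j = b.testBit j := fun j hj => by
    have hlt : a ^^^ b < 2 ^ j :=
      (lt_pow_succ_log_self one_lt_two _).trans_le (Nat.pow_le_pow_right two_pos hj)
    simpa [testBit_xor] using testBit_lt_two_pow hlt
  suffices hb : b.testBit t = true from ⟨by simpa [hb] using hdiff, hb⟩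
  rw [← Bool.not_eq_false]
  intro hb
  have ha : a.testBit t = true := by simpa [hb] using hdiff
  exact h.not_gt (lt_of_testBit t hb ha fun j hj => (hhigh j hj).symm)

theorem log_two_xor_ne_of_lt {a b c : ℕ} (hab : a < b) (hbc : b < c) :
    log 2 (a ^^^ b) ≠ log 2 (b ^^^ c) := fun h => by
  have h₁ := (testBit_log_two_xor_of_lt hab).2
  rw [h, (testBit_log_two_xor_of_lt hbc).1] at h₁
  exact Bool.false_ne_true h₁

theorem log_two_xor_lt {a b m : ℕ} (hab : a ≠ b) (ha : a < 2 ^ m) (hb : b < 2 ^ m) :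
    log 2 (a ^^^ b) < m :=
  log_lt_of_lt_pow (xor_eq_zero_iff.not.2 hab) (xor_lt_two_pow ha hb)

end Nat

def outColors {α C : Type*} [LT α] (d : {e : α × α // e.1 < e.2} → C) (a : α) : Set C :=
  {c | ∃ b, ∃ h : a < b, d ⟨(a, b), h⟩ = c}

theorem outColors_injective {α C : Type*} [LinearOrder α] {d : {e : α × α // e.1 < e.2} → C}
    (hd : ∀ a b c (hab : a < b) (hbc : b < c), d ⟨(a, b), hab⟩ ≠ d ⟨(b, c), hbc⟩) :
    Function.Injective (outColors d) := by
  refine .of_lt_imp_ne fun a b hab heq => ?_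
  obtain ⟨c, hbc, hc⟩ : d ⟨(a, b), hab⟩ ∈ outColors d b := heq ▸ ⟨b, hab, rfl⟩
  exact hd a b c hab hbc hc.symm

theorem tournamentEdgeColorable_iff {n m : ℕ} :
    TournamentEdgeColorable n m ↔ ∃ d : {e : Fin n × Fin n // e.1 < e.2} → Fin m,
      ∀ a b c (hab : a < b) (hbc : b < c), d ⟨(a, b), hab⟩ ≠ d ⟨(b, c), hbc⟩ := by
  refine exists_congr fun d => ⟨fun hd a b c hab hbc => ?_, fun hd w hw => hd _ _ _ _ _⟩
  have hw : IsWalk (fun i j : Fin n => i < j) ![a, b, c] := fun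
    | 0, _ => hab
    | 1, _ => hbc
  exact hd _ hw

theorem TournamentEdgeColorable.le_two_pow {n m : ℕ} (h : TournamentEdgeColorable n m) :
    n ≤ 2 ^ m := by
  obtain ⟨d, hd⟩ := tournamentEdgeColorable_iff.1 h
  simpa [Fintype.card_set] using Fintype.card_le_of_injective _ (outColors_injective hd)

theorem tournamentEdgeColorable_of_le_two_pow {n m : ℕ} (h : n ≤ 2 ^ m) :
    TournamentEdgeColorable n m :=
  tournamentEdgeColorable_iff.2
    ⟨fun e => ⟨Nat.log 2 (e.1.1 ^^^ e.1.2),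
      Nat.log_two_xor_lt (Fin.val_ne_of_ne e.2.ne) (e.1.1.2.trans_le h) (e.1.2.2.trans_le h)⟩,
    fun _ _ _ hab hbc heq => Nat.log_two_xor_ne_of_lt hab hbc (Fin.val_eq_of_eq heq)⟩

theorem tournamentEdgeColorable_iff_le_two_pow {n m : ℕ} :
    TournamentEdgeColorable n m ↔ n ≤ 2 ^ m :=
  ⟨TournamentEdgeColorable.le_two_pow, tournamentEdgeColorable_of_le_two_pow⟩

theorem transitive_tournament_directed_chromatic_index_general (n : ℕ) :
    sInf {m : ℕ | TournamentEdgeColorable n m} = Nat.clog 2 n ∧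
    (∀ m : ℕ, TournamentEdgeColorable n m ↔ n ≤ 2 ^ m) := by
  have hset : {m : ℕ | TournamentEdgeColorable n m} = Set.Ici (Nat.clog 2 n) :=
    Set.ext fun _ => tournamentEdgeColorable_iff_le_two_pow.trans
      (Nat.clog_le_iff_le_pow one_lt_two).symm
  exact ⟨hset ▸ csInf_Ici, fun _ => tournamentEdgeColorable_iff_le_two_pow⟩

/-- **Directed chromatic index of the transitive tournament.** For `n ≥ 1`, the least `m`
such that the edges of the transitive tournament on `Fin n` can be colored by `m` colors
with the two edges of every 3-walk colored differently equals `⌈log₂ n⌉`; equivalently,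
such an edge coloring with `m` colors exists iff `n ≤ 2 ^ m`. -/
theorem transitive_tournament_directed_chromatic_index (n : ℕ) (hn : 1 ≤ n) :
    sInf {m : ℕ | TournamentEdgeColorable n m} = Nat.clog 2 n ∧
    (∀ m : ℕ, TournamentEdgeColorable n m ↔ n ≤ 2 ^ m) :=
  transitive_tournament_directed_chromatic_index_general n
end

section
/- Orientable edge P-colorability characterization: Let G₀ be a simple graph on a finite vertex set V and P a finite poset. Then there exists an orientation G of G₀ whose 2-walks (edges) admit a P-coloring if and only if the chromatic number of G₀ is at most |A(P)|, the number of lower sets of P; moreover, when this holds such an orientation can be chosen acyclic. -/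
/-- `G` is an orientation of the simple graph `G₀`: for every edge `{u, v}` of `G₀`
exactly one of `G u v`, `G v u` holds, and every directed edge of `G` comes from an edge
of `G₀`. -/
def IsOrientation {V : Type*} (G₀ : SimpleGraph V) (G : V → V → Prop) : Prop :=
  (∀ u v : V, G₀.Adj u v → Xor' (G u v) (G v u)) ∧ (∀ u v : V, G u v → G₀.Adj u v)

/-- `G` contains a directed cycle: vertices `v 0, …, v (m-1)` (`m ≥ 1`) with consecutive
directed edges and a directed edge from the last vertex back to the first. -/
def HasDirCycle {V : Type*} (G : V → V → Prop) : Prop :=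
  ∃ (m : ℕ) (_ : 1 ≤ m) (v : Fin m → V),
    (∀ i : ℕ, ∀ h : i + 1 < m, G (v ⟨i, Nat.lt_of_succ_lt h⟩) (v ⟨i + 1, h⟩)) ∧
    G (v ⟨m - 1, by omega⟩) (v ⟨0, by omega⟩)

/-!
Given an orientation whose arcs carry a `P`-coloring, label every vertex by the lower set
generated by the colors of its out-arcs. The color of an arc `u → v` lies in the label of `u`
but not in that of `v` (otherwise some arc `v → w` would have a color above it), so the labels
properly color the graph by lower sets. Conversely, from a proper coloring by lower sets, orient
every edge downwards along a linear extension of inclusion; then the label of the tail is never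
contained in that of the head, any element of the difference colors the arc, and the orientation
is acyclic because the labels strictly decrease along arcs.
-/

open SimpleGraph

lemma SimpleGraph.colorable_natCard_iff {V α : Type*} [Finite α] (G : SimpleGraph V) :
    G.Colorable (Nat.card α) ↔ Nonempty (G.Coloring α) :=
  (G.recolorOfEquiv (Finite.equivFin α)).symm.nonempty_congr

lemma SimpleGraph.chromaticNumber_le_natCard_iff {V α : Type*} [Finite α] (G : SimpleGraph V) :
    G.chromaticNumber ≤ Nat.card α ↔ Nonempty (G.Coloring α) :=
  chromaticNumber_le_iff_colorable.trans G.colorable_natCard_iff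

section Digraph

variable {V P : Type*} [Preorder P] {G : V → V → Prop}

def IsArcPColoring (G : V → V → Prop) (c : ∀ u v, G u v → P) : Prop :=
  ∀ ⦃u v w : V⦄ (huv : G u v) (hvw : G v w), ¬ c u v huv ≤ c v w hvw

def Walks.ofArc {u v : V} (h : G u v) : Walks G 2 :=
  ⟨![u, v], fun i hi => by obtain rfl : i = 0 := (by omega); exact h⟩

lemma exists_isPColoring_two_iff :
    (∃ c : Walks G 2 → P, IsPColoring G 2 c) ↔
      ∃ c : ∀ u v, G u v → P, IsArcPColoring G c := by
  constructor
  · rintro ⟨c, hc⟩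
    refine ⟨fun u v h => c (Walks.ofArc h), fun u v w huv hvw => ?_⟩
    have hpath : IsWalk G ![u, v, w] := fun i hi => by
      obtain rfl | rfl : i = 0 ∨ i = 1 := by omega
      exacts [huv, hvw]
    refine fun hle => hc ⟨_, hpath⟩ ?_
    convert hle using 2 <;>
      exact congrArg c (Subtype.ext (funext fun i => by fin_cases i <;> rfl))
  · rintro ⟨c, hc⟩
    exact ⟨fun e => c _ _ (e.2 0 (by omega)), fun e => hc _ _⟩

def outLowerSet (c : ∀ u v, G u v → P) (v : V) : LowerSet P :=
  lowerClosure (Set.range fun e : {w // G v w} => c v e e.2)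

lemma mem_outLowerSet (c : ∀ u v, G u v → P) {u v : V} (h : G u v) :
    c u v h ∈ outLowerSet c u :=
  subset_lowerClosure ⟨⟨v, h⟩, rfl⟩

lemma not_mem_outLowerSet {c : ∀ u v, G u v → P} (hc : IsArcPColoring G c) {u v : V}
    (h : G u v) : c u v h ∉ outLowerSet c v := by
  intro hmem
  obtain ⟨_, ⟨⟨w, hvw⟩, rfl⟩, hle⟩ := mem_lowerClosure.mp hmem
  exact hc h hvw hle

lemma outLowerSet_ne_of_arc {c : ∀ u v, G u v → P} (hc : IsArcPColoring G c) {u v : V}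
    (h : G u v) : outLowerSet c u ≠ outLowerSet c v := fun heq =>
  not_mem_outLowerSet hc h (heq ▸ mem_outLowerSet c h)

lemma exists_isArcPColoring_of_not_le (f : V → LowerSet P)
    (hf : ∀ u v, G u v → ¬ f u ≤ f v) : ∃ c : ∀ u v, G u v → P, IsArcPColoring G c := by
  choose c hcu hcv using fun u v h =>
    Set.not_subset.mp (mt LowerSet.coe_subset_coe.mp (hf u v h))
  exact ⟨c, fun u v w huv hvw hle => hcv u v huv ((f v).lower hle (hcu v w hvw))⟩

lemma not_hasDirCycle_of_forall_lt {α : Type*} [Preorder α] (r : V → α)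
    (hr : ∀ u v, G u v → r v < r u) : ¬ HasDirCycle G := by
  rintro ⟨m, hm, v, hpath, hback⟩
  have hle_start : ∀ i (hi : i < m), r (v ⟨i, hi⟩) ≤ r (v ⟨0, by omega⟩) := by
    intro i
    induction i with
    | zero => exact fun _ => le_rfl
    | succ i ih => exact fun hi => ((hr _ _ (hpath i hi)).trans_le (ih (by omega))).le
  exact (hr _ _ hback).not_ge (hle_start (m - 1) (by omega))

end Digraph

section Orientation

variable {V P : Type*} (G₀ : SimpleGraph V)

def orientByRank {α : Type*} [LT α] (r : V → α) (u v : V) : Prop :=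
  G₀.Adj u v ∧ r v < r u

lemma isOrientation_orientByRank {α : Type*} [LinearOrder α] {r : V → α}
    (hr : ∀ u v, G₀.Adj u v → r u ≠ r v) : IsOrientation G₀ (orientByRank G₀ r) := by
  refine ⟨fun u v hadj => ?_, fun u v h => h.1⟩
  rcases (hr u v hadj).lt_or_gt with hlt | hlt
  · exact .inr ⟨⟨hadj.symm, hlt⟩, fun h => h.2.asymm hlt⟩
  · exact .inl ⟨⟨hadj, hlt⟩, fun h => h.2.asymm hlt⟩

variable [Preorder P] {G₀}

def IsOrientation.lowerSetColoring {G : V → V → Prop} (hG : IsOrientation G₀ G)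
    {c : ∀ u v, G u v → P} (hc : IsArcPColoring G c) : G₀.Coloring (LowerSet P) :=
  Coloring.mk (outLowerSet c) fun {u v} hadj => (hG.1 u v hadj).elim
    (fun h => outLowerSet_ne_of_arc hc h.1) (fun h => (outLowerSet_ne_of_arc hc h.1).symm)

lemma SimpleGraph.Coloring.exists_acyclic_orientation_isPColoring
    (C : G₀.Coloring (LowerSet P)) :
    ∃ G : V → V → Prop, IsOrientation G₀ G ∧ ¬ HasDirCycle G ∧
      ∃ c : Walks G 2 → P, IsPColoring G 2 c := by
  let r : V → LinearExtension (LowerSet P) := fun v => toLinearExtension (C v)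
  have hnot_le : ∀ u v, orientByRank G₀ r u v → ¬ C u ≤ C v := fun u v h hle =>
    h.2.not_ge (toLinearExtension.monotone hle)
  exact ⟨orientByRank G₀ r, isOrientation_orientByRank G₀ fun u v hadj => C.valid hadj,
    not_hasDirCycle_of_forall_lt r fun u v h => h.2,
    exists_isPColoring_two_iff.mpr (exists_isArcPColoring_of_not_le C hnot_le)⟩

end Orientation

theorem orientation_edge_coloring_characterization_general {V : Type*}
    (G₀ : SimpleGraph V) (P : Type*) [PartialOrder P] [Fintype P] :
    ((∃ G : V → V → Prop, IsOrientation G₀ G ∧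
        ∃ c : Walks G 2 → P, IsPColoring G 2 c) ↔
      G₀.chromaticNumber ≤ (Nat.card (LowerSet P) : ℕ∞)) ∧
    (G₀.chromaticNumber ≤ (Nat.card (LowerSet P) : ℕ∞) →
      ∃ G : V → V → Prop, IsOrientation G₀ G ∧ ¬ HasDirCycle G ∧
        ∃ c : Walks G 2 → P, IsPColoring G 2 c) := by
  rw [G₀.chromaticNumber_le_natCard_iff]
  refine ⟨⟨fun ⟨G, hG, hcol⟩ => ?_, fun ⟨C⟩ => ?_⟩,
    fun ⟨C⟩ => C.exists_acyclic_orientation_isPColoring⟩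
  · obtain ⟨c, hc⟩ := exists_isPColoring_two_iff.mp hcol
    exact ⟨hG.lowerSetColoring hc⟩
  · obtain ⟨G, hG, -, hcol⟩ := C.exists_acyclic_orientation_isPColoring
    exact ⟨G, hG, hcol⟩

/-- **Orientable edge `P`-colorability characterization.** For a simple graph `G₀` on a
finite vertex set and a finite poset `P`: there is an orientation `G` of `G₀` whose
2-walks (edges) admit a `P`-coloring iff the chromatic number of `G₀` is at most
`|A(P)|`, the number of lower sets of `P`; moreover, when this holds the orientation can
be chosen acyclic. -/
theorem orientation_edge_coloring_characterization {V : Type*} [Fintype V]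
    (G₀ : SimpleGraph V) (P : Type*) [PartialOrder P] [Fintype P] :
    ((∃ G : V → V → Prop, IsOrientation G₀ G ∧
        ∃ c : Walks G 2 → P, IsPColoring G 2 c) ↔
      G₀.chromaticNumber ≤ (Nat.card (LowerSet P) : ℕ∞)) ∧
    (G₀.chromaticNumber ≤ (Nat.card (LowerSet P) : ℕ∞) →
      ∃ G : V → V → Prop, IsOrientation G₀ G ∧ ¬ HasDirCycle G ∧
        ∃ c : Walks G 2 → P, IsPColoring G 2 c) :=
  orientation_edge_coloring_characterization_general G₀ P
end
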